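/- Let c > 1 be real and set p = 2·log c. Then the map f ↦ S_f, where S_f(w) = Log f(e^w) − w/2 for w ∈ D, is well defined on M_c (i.e., f(e^w) ∈ ℂ ∖ (−∞,0] for every f ∈ M_c and w ∈ D) and maps M_c bijectively onto W_p, where membership of functions in W_p is understood as equality of restrictions to D. -/

import Mathlib

open Complex MeasureTheory Filter
open Topology Set

noncomputable section

/-- The open horizontal strip `D = {w : ℂ | -π < Im w < π}`. -/
def strip : Set ℂ := {w : ℂ | -Real.pi < w.im ∧ w.im < Real.pi}

/-- The class `OM₊`: functions analytic on the slit plane `ℂ \ (-∞,0]`,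
nonnegative real on the positive real axis, with nonnegative imaginary part
on the upper half-plane. -/
def OMplus (f : ℂ → ℂ) : Prop :=
  DifferentiableOn ℂ f Complex.slitPlane ∧
  (∀ x : ℝ, 0 < x → ∃ t : ℝ, 0 ≤ t ∧ f (x : ℂ) = (t : ℂ)) ∧
  (∀ z : ℂ, 0 < z.im → 0 ≤ (f z).im)

/-- The Molnár class `M_c` of functions of type `c`. -/
def Mclass (c : ℝ) (f : ℂ → ℂ) : Prop :=
  OMplus f ∧ f 1 = 1 ∧
  (∀ x : ℝ, 0 < x → f (x : ℂ) = (x : ℂ) * f ((x : ℂ)⁻¹)) ∧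
  (∀ x : ℝ, 0 < x → f ((c ^ 2 * x : ℝ) : ℂ) = (c : ℂ) * f (x : ℂ))

/-- The class `W_p`: functions analytic on the strip `D` with
`|Im S(w)| ≤ Im w / 2` on the upper half of the strip, `S(0) = 0`,
even, and `p`-periodic. -/
def Wclass (p : ℝ) (S : ℂ → ℂ) : Prop :=
  DifferentiableOn ℂ S strip ∧
  (∀ w ∈ strip, 0 ≤ w.im → |(S w).im| ≤ w.im / 2) ∧
  S 0 = 0 ∧
  (∀ w ∈ strip, S (-w) = S w) ∧
  (∀ w ∈ strip, S (w + (p : ℂ)) = S w)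


lemma isPreconnected_slitPlane : IsPreconnected Complex.slitPlane := by
  have h : IsPathConnected Complex.slitPlane := by
    refine isPathConnected_iff.mpr ⟨⟨1, Complex.one_mem_slitPlane⟩, fun x hx y hy => ?_⟩
    have h1 : JoinedIn Complex.slitPlane 1 x :=
      JoinedIn.of_segment_subset (Complex.starConvex_one_slitPlane.segment_subset hx)
    have h2 : JoinedIn Complex.slitPlane 1 y :=
      JoinedIn.of_segment_subset (Complex.starConvex_one_slitPlane.segment_subset hy)
    exact h1.symm.trans h2
  exact h.isConnected.isPreconnected

lemma hasDerivAt_conj_conj {f : ℂ → ℂ} {f' z : ℂ}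
    (h : HasDerivAt f f' ((starRingEnd ℂ) z)) :
    HasDerivAt (fun w => (starRingEnd ℂ) (f ((starRingEnd ℂ) w))) ((starRingEnd ℂ) f') z := by
  rw [hasDerivAt_iff_tendsto] at h ⊢
  have hc : Tendsto (fun w : ℂ => (starRingEnd ℂ) w) (𝓝 z) (𝓝 ((starRingEnd ℂ) z)) :=
    Complex.continuous_conj.tendsto z
  refine (h.comp hc).congr fun x => ?_
  simp only [Function.comp_apply]
  have e1 : (starRingEnd ℂ) x - (starRingEnd ℂ) z = (starRingEnd ℂ) (x - z) := (map_sub _ _ _).symm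
  have e2 : (starRingEnd ℂ) (f ((starRingEnd ℂ) x)) - (starRingEnd ℂ) (f ((starRingEnd ℂ) z))
        - (x - z) • (starRingEnd ℂ) f'
      = (starRingEnd ℂ) (f ((starRingEnd ℂ) x) - f ((starRingEnd ℂ) z)
        - ((starRingEnd ℂ) x - (starRingEnd ℂ) z) • f') := by
    simp only [smul_eq_mul, map_sub, map_mul, Complex.conj_conj]
  simp only [smul_eq_mul] at e2
  simp only [smul_eq_mul]
  rw [e2, e1, Complex.norm_conj, Complex.norm_conj]









lemma freq_one {P : ℂ → Prop} (hP : ∀ x : ℝ, 1 < x → P (x : ℂ)) :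
    ∃ᶠ z in 𝓝[≠] (1 : ℂ), P z := by
  have hu : Tendsto (fun n : ℕ => (1 + 1 / (n + 1) : ℝ)) atTop (𝓝 1) := by
    simpa using (tendsto_one_div_add_atTop_nhds_zero_nat).const_add (1 : ℝ)
  have hc : Tendsto (fun n : ℕ => ((1 + 1 / (n + 1) : ℝ) : ℂ)) atTop (𝓝 (1 : ℂ)) := by
    exact (Complex.continuous_ofReal.tendsto 1).comp hu
  have hgt : ∀ n : ℕ, (1 : ℝ) < 1 + 1 / (n + 1) := by
    intro n
    have : (0 : ℝ) < 1 / (n + 1) := by positivity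
    linarith
  have hne : ∀ n : ℕ, ((1 + 1 / (n + 1) : ℝ) : ℂ) ≠ 1 := by
    intro n h
    have : (1 + 1 / (n + 1) : ℝ) = 1 := by exact_mod_cast h
    linarith [hgt n]
  have ht : Tendsto (fun n : ℕ => ((1 + 1 / (n + 1) : ℝ) : ℂ)) atTop (𝓝[≠] (1 : ℂ)) :=
    tendsto_nhdsWithin_iff.mpr ⟨hc, Eventually.of_forall hne⟩
  exact ht.frequently (Frequently.of_forall fun n => hP _ (hgt n))



lemma eqOn_slitPlane {f g : ℂ → ℂ}
    (hf : DifferentiableOn ℂ f Complex.slitPlane)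
    (hg : DifferentiableOn ℂ g Complex.slitPlane)
    (h : ∀ x : ℝ, 1 < x → f (x : ℂ) = g (x : ℂ)) :
    Set.EqOn f g Complex.slitPlane :=
  (hf.analyticOnNhd Complex.isOpen_slitPlane).eqOn_of_preconnected_of_frequently_eq
    (hg.analyticOnNhd Complex.isOpen_slitPlane) isPreconnected_slitPlane
    Complex.one_mem_slitPlane (freq_one h)

lemma inv_mem_slitPlane {z : ℂ} (hz : z ∈ Complex.slitPlane) : z⁻¹ ∈ Complex.slitPlane := by
  rw [Complex.mem_slitPlane_iff] at hz ⊢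
  rw [Complex.inv_re, Complex.inv_im]
  have hz0 : z ≠ 0 := by
    rintro rfl; simp at hz
  have hsq : 0 < Complex.normSq z := Complex.normSq_pos.mpr hz0
  rcases hz with h | h
  · left; positivity
  · right
    simp only [ne_eq, neg_div, neg_eq_zero, div_eq_zero_iff, not_or]
    exact ⟨h, hsq.ne'⟩

section Mconsequences
variable {c : ℝ} {f : ℂ → ℂ}


lemma conj_mem_slitPlane {z : ℂ} (hz : z ∈ Complex.slitPlane) :
    (starRingEnd ℂ) z ∈ Complex.slitPlane := by
  rw [Complex.mem_slitPlane_iff] at hz ⊢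
  simpa using hz

lemma Mclass.conj_eq (hf : Mclass c f) :
    ∀ z ∈ Complex.slitPlane, f ((starRingEnd ℂ) z) = (starRingEnd ℂ) (f z) := by
  have hd : DifferentiableOn ℂ (fun w => (starRingEnd ℂ) (f ((starRingEnd ℂ) w)))
      Complex.slitPlane := by
    intro z hz
    have hz' : (starRingEnd ℂ) z ∈ Complex.slitPlane := conj_mem_slitPlane hz
    have h := (hf.1.1.differentiableAt (Complex.isOpen_slitPlane.mem_nhds hz')).hasDerivAt
    exact (hasDerivAt_conj_conj h).differentiableAt.differentiableWithinAt
  have heq : Set.EqOn (fun w => (starRingEnd ℂ) (f ((starRingEnd ℂ) w))) f Complex.slitPlane := by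
    refine eqOn_slitPlane hd hf.1.1 fun x hx => ?_
    obtain ⟨t, _, ht⟩ := hf.1.2.1 x (lt_trans one_pos hx)
    simp only [Complex.conj_ofReal, ht, Complex.conj_ofReal]
  intro z hz
  have h := heq hz
  simp only at h
  rw [← h, Complex.conj_conj]

lemma Mclass.funcEq1 (hf : Mclass c f) :
    ∀ z ∈ Complex.slitPlane, f z = z * f z⁻¹ := by
  have hd : DifferentiableOn ℂ (fun z => z * f z⁻¹) Complex.slitPlane := by
    intro z hz
    have hz' : z⁻¹ ∈ Complex.slitPlane := inv_mem_slitPlane hz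
    have h1 : DifferentiableAt ℂ f z⁻¹ :=
      hf.1.1.differentiableAt (Complex.isOpen_slitPlane.mem_nhds hz')
    have h2 : DifferentiableAt ℂ (fun z : ℂ => f z⁻¹) z :=
      h1.comp z (differentiableAt_inv (Complex.slitPlane_ne_zero hz))
    exact (differentiableAt_id.mul h2).differentiableWithinAt
  refine eqOn_slitPlane hf.1.1 hd fun x hx => ?_
  have := hf.2.2.1 x (lt_trans one_pos hx)
  simpa using this

lemma Mclass.funcEq2 (hc : 1 < c) (hf : Mclass c f) :
    ∀ z ∈ Complex.slitPlane, f ((c : ℂ) ^ 2 * z) = (c : ℂ) * f z := by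
  have hc0 : (0 : ℝ) < c := lt_trans one_pos hc
  have hd1 : DifferentiableOn ℂ (fun z => f ((c : ℂ) ^ 2 * z)) Complex.slitPlane := by
    intro z hz
    have hz' : (c : ℂ) ^ 2 * z ∈ Complex.slitPlane := by
      rw [Complex.mem_slitPlane_iff] at hz ⊢
      have : ((c : ℂ) ^ 2 * z).re = c ^ 2 * z.re := by
        simp [Complex.mul_re, ← Complex.ofReal_pow]
      have him : ((c : ℂ) ^ 2 * z).im = c ^ 2 * z.im := by
        simp [Complex.mul_im, ← Complex.ofReal_pow]
      rw [this, him]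
      have hcsq : (0 : ℝ) < c ^ 2 := by positivity
      rcases hz with h | h
      · left; positivity
      · right; exact mul_ne_zero hcsq.ne' h
    have h1 : DifferentiableAt ℂ f ((c : ℂ) ^ 2 * z) :=
      hf.1.1.differentiableAt (Complex.isOpen_slitPlane.mem_nhds hz')
    exact (h1.comp z ((differentiableAt_const _).mul differentiableAt_id)).differentiableWithinAt
  have hd2 : DifferentiableOn ℂ (fun z => (c : ℂ) * f z) Complex.slitPlane :=
    fun z hz => ((hf.1.1 z hz).const_mul _)
  refine eqOn_slitPlane hd1 hd2 fun x hx => ?_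
  have := hf.2.2.2 x (lt_trans one_pos hx)
  rw [← this]
  norm_cast

lemma Mclass.not_const (hc : 1 < c) (hf : Mclass c f) :
    ¬ ∃ w, ∀ z ∈ Complex.slitPlane, f z = w := by
  rintro ⟨w, hw⟩
  have hc0 : (0 : ℝ) < c := lt_trans one_pos hc
  have h1 : f 1 = w := by
    have := hw 1 Complex.one_mem_slitPlane; simpa using this
  have h2 : f ((c : ℂ) ^ 2) = w := by
    have hmem : ((c : ℂ) ^ 2 : ℂ) ∈ Complex.slitPlane := by
      rw [show ((c : ℂ) ^ 2) = ((c ^ 2 : ℝ) : ℂ) by push_cast; ring]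
      exact Complex.ofReal_mem_slitPlane.2 (by positivity)
    exact hw _ hmem
  have h3 : f ((c : ℂ) ^ 2) = (c : ℂ) * f 1 := by
    have := hf.funcEq2 hc 1 Complex.one_mem_slitPlane
    simpa using this
  have hw1 : w = 1 := by rw [← h1, hf.2.1]
  rw [h2, hf.2.1, mul_one, hw1] at h3
  have : (1 : ℝ) = c := by exact_mod_cast h3
  linarith

lemma Mclass.isOpen_image (hc : 1 < c) (hf : Mclass c f) {s : Set ℂ}
    (hs : s ⊆ Complex.slitPlane) (hso : IsOpen s) : IsOpen (f '' s) := by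
  have hA : AnalyticOnNhd ℂ f Complex.slitPlane :=
    hf.1.1.analyticOnNhd Complex.isOpen_slitPlane
  rcases hA.is_constant_or_isOpen isPreconnected_slitPlane with ⟨w, hw⟩ | h
  · exact absurd ⟨w, hw⟩ (hf.not_const hc)
  · exact h s hs hso

lemma Mclass.im_pos (hc : 1 < c) (hf : Mclass c f) {z : ℂ} (hz : 0 < z.im) :
    0 < (f z).im := by
  rcases lt_or_eq_of_le (hf.1.2.2 z hz) with h | h
  · exact h
  exfalso
  have hsub : {w : ℂ | 0 < w.im} ⊆ Complex.slitPlane := fun w hw =>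
    Complex.mem_slitPlane_iff.mpr (Or.inr (ne_of_gt hw))
  have hopen : IsOpen (f '' {w : ℂ | 0 < w.im}) :=
    hf.isOpen_image hc hsub (isOpen_lt continuous_const Complex.continuous_im)
  have hmem : f z ∈ f '' {w : ℂ | 0 < w.im} := ⟨z, hz, rfl⟩
  obtain ⟨ε, hε, hball⟩ := Metric.isOpen_iff.mp hopen _ hmem
  have hq : f z - ((ε / 2 : ℝ) : ℂ) * Complex.I ∈ Metric.ball (f z) ε := by
    rw [Metric.mem_ball, dist_eq_norm]
    simp only [sub_sub_cancel_left, norm_neg]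
    rw [norm_mul, Complex.norm_I, mul_one]
    rw [Complex.norm_real, Real.norm_eq_abs, abs_of_pos (by linarith)]
    linarith
  obtain ⟨z', hz', hfz'⟩ := hball hq
  have him : (f z').im = (f z).im - ε / 2 := by
    rw [hfz']
    simp
  have hge := hf.1.2.2 z' hz'
  rw [him, ← h] at hge
  linarith




lemma Mclass.im_neg (hc : 1 < c) (hf : Mclass c f) {z : ℂ} (hz : z.im < 0) :
    (f z).im < 0 := by
  have hz' : 0 < ((starRingEnd ℂ) z).im := by simpa using hz
  have hmem : (starRingEnd ℂ) z ∈ Complex.slitPlane :=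
    Complex.mem_slitPlane_iff.mpr (Or.inr (ne_of_gt hz'))
  have h := hf.conj_eq ((starRingEnd ℂ) z) hmem
  rw [Complex.conj_conj] at h
  have h2 := hf.im_pos hc hz'
  rw [h]
  simpa using h2

lemma Mclass.pos_real (hc : 1 < c) (hf : Mclass c f) {x : ℝ} (hx : 0 < x) :
    ∃ t : ℝ, 0 < t ∧ f (x : ℂ) = (t : ℂ) := by
  obtain ⟨t, ht0, ht⟩ := hf.1.2.1 x hx
  rcases ht0.lt_or_eq with h | h
  · exact ⟨t, h, ht⟩
  exfalso
  have hx' : (x : ℂ) ∈ Complex.slitPlane := Complex.ofReal_mem_slitPlane.2 hx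
  have hopen : IsOpen (f '' Complex.slitPlane) :=
    hf.isOpen_image hc subset_rfl Complex.isOpen_slitPlane
  have hmem : (0 : ℂ) ∈ f '' Complex.slitPlane := ⟨x, hx', by rw [ht, ← h]; simp⟩
  obtain ⟨ε, hε, hball⟩ := Metric.isOpen_iff.mp hopen _ hmem
  have hq : -((ε / 2 : ℝ) : ℂ) ∈ Metric.ball (0 : ℂ) ε := by
    rw [Metric.mem_ball, dist_eq_norm]
    simp only [sub_zero, norm_neg, Complex.norm_real, Real.norm_eq_abs]
    rw [abs_of_pos (by linarith)]
    linarith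
  obtain ⟨z', hz', hfz'⟩ := hball hq
  rcases lt_trichotomy z'.im 0 with h1 | h1 | h1
  · have := hf.im_neg hc h1
    rw [hfz'] at this
    simp at this
  · -- z' is a positive real
    have hre : 0 < z'.re := by
      rcases Complex.mem_slitPlane_iff.mp hz' with h2 | h2
      · exact h2
      · exact absurd h1 h2
    have hz'' : z' = ((z'.re : ℝ) : ℂ) := by
      apply Complex.ext <;> simp [h1]
    obtain ⟨s, hs0, hs⟩ := hf.1.2.1 z'.re hre
    rw [hz'', hs] at hfz'
    have : s = -(ε/2) := by exact_mod_cast hfz'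
    linarith
  · have := hf.im_pos hc h1
    rw [hfz'] at this
    simp at this

lemma strip_exp_mem {w : ℂ} (hw : w ∈ strip) : Complex.exp w ∈ Complex.slitPlane := by
  obtain ⟨h1, h2⟩ := hw
  rcases eq_or_ne w.im 0 with h | h
  · rw [Complex.mem_slitPlane_iff]
    left
    rw [Complex.exp_re, h]
    simp only [Real.cos_zero, mul_one]
    positivity
  · rw [Complex.mem_slitPlane_iff]
    right
    rw [Complex.exp_im]
    refine mul_ne_zero (Real.exp_pos _).ne' ?_
    intro hs
    exact h ((Real.sin_eq_zero_iff_of_lt_of_lt h1 h2).mp hs)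

lemma Mclass.wd (hc : 1 < c) (hf : Mclass c f) {w : ℂ} (hw : w ∈ strip) :
    f (Complex.exp w) ∈ Complex.slitPlane := by
  obtain ⟨h1, h2⟩ := hw
  rcases lt_trichotomy w.im 0 with h | h | h
  · have him : (Complex.exp w).im < 0 := by
      rw [Complex.exp_im]
      have hs : Real.sin w.im < 0 := by
        have := Real.sin_pos_of_pos_of_lt_pi (x := -w.im) (by linarith) (by linarith)
        rw [Real.sin_neg] at this
        linarith
      have := Real.exp_pos w.re
      nlinarith
    exact Complex.mem_slitPlane_iff.mpr (Or.inr (ne_of_lt (hf.im_neg hc him)))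
  · have : Complex.exp w = ((Real.exp w.re : ℝ) : ℂ) := by
      rw [Complex.ofReal_exp]
      congr 1
      apply Complex.ext <;> simp [h]
    rw [this]
    obtain ⟨t, ht0, ht⟩ := hf.pos_real hc (Real.exp_pos w.re)
    rw [ht]
    exact Complex.ofReal_mem_slitPlane.2 ht0
  · have him : 0 < (Complex.exp w).im := by
      rw [Complex.exp_im]
      have hs : 0 < Real.sin w.im := Real.sin_pos_of_pos_of_lt_pi h h2
      have := Real.exp_pos w.re
      nlinarith
    exact Complex.mem_slitPlane_iff.mpr (Or.inr (ne_of_gt (hf.im_pos hc him)))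



end Mconsequences

lemma isOpen_strip : IsOpen strip :=
  (isOpen_lt continuous_const Complex.continuous_im).inter
    (isOpen_lt Complex.continuous_im continuous_const)

lemma arg_pos_of_im_pos {z : ℂ} (h : 0 < z.im) : 0 < Complex.arg z := by
  rcases (Complex.arg_nonneg_iff.2 h.le).lt_or_eq with h1 | h1
  · exact h1
  · exact absurd (Complex.arg_eq_zero_iff.mp h1.symm).2 (ne_of_gt h)

lemma log_mem_strip {z : ℂ} (hz : z ∈ Complex.slitPlane) : Complex.log z ∈ strip := by
  constructor
  · rw [Complex.log_im]; exact Complex.neg_pi_lt_arg z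
  · rw [Complex.log_im]
    rcases (Complex.arg_le_pi z).lt_or_eq with h | h
    · exact h
    · exfalso
      obtain ⟨h1, h2⟩ := Complex.arg_eq_pi_iff.mp h
      rcases Complex.mem_slitPlane_iff.mp hz with h3 | h3
      · linarith
      · exact h3 h2

lemma exp_im_pos {w : ℂ} (hw : w ∈ strip) (h : 0 < w.im) : 0 < (Complex.exp w).im := by
  rw [Complex.exp_im]
  have hs : 0 < Real.sin w.im := Real.sin_pos_of_pos_of_lt_pi h hw.2
  have := Real.exp_pos w.re
  nlinarith

lemma exp_im_neg {w : ℂ} (hw : w ∈ strip) (h : w.im < 0) : (Complex.exp w).im < 0 := by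
  rw [Complex.exp_im]
  have hs : Real.sin w.im < 0 := by
    have := Real.sin_pos_of_pos_of_lt_pi (x := -w.im) (by linarith) (by linarith [hw.1])
    rw [Real.sin_neg] at this; linarith
  have := Real.exp_pos w.re
  nlinarith

lemma neg_mem_strip {w : ℂ} (hw : w ∈ strip) : -w ∈ strip := by
  obtain ⟨h1, h2⟩ := hw
  constructor
  · simp only [Complex.neg_im]; linarith
  · simp only [Complex.neg_im]; linarith

lemma Mclass.log_split (hc : 1 < c) (hf : Mclass c f) {w : ℂ} (hw : w ∈ strip) :
    Complex.log (f (Complex.exp w)) = w + Complex.log (f (Complex.exp (-w))) := by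
  have hz : Complex.exp w ∈ Complex.slitPlane := strip_exp_mem hw
  have hnw : -w ∈ strip := neg_mem_strip hw
  have hiz : Complex.exp (-w) = (Complex.exp w)⁻¹ := Complex.exp_neg w
  have hu : f (Complex.exp (-w)) ∈ Complex.slitPlane := hf.wd hc hnw
  have hu0 : f (Complex.exp (-w)) ≠ 0 := Complex.slitPlane_ne_zero hu
  have hz0 : Complex.exp w ≠ 0 := Complex.exp_ne_zero w
  have hE : f (Complex.exp w) = Complex.exp w * f (Complex.exp (-w)) := by
    rw [hiz]; exact hf.funcEq1 _ hz
  have hargz : Complex.arg (Complex.exp w) = w.im := by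
    have := Complex.log_exp hw.1 hw.2.le
    rw [← Complex.log_im, this]
  have harg : Complex.arg (Complex.exp w) + Complex.arg (f (Complex.exp (-w))) ∈
      Set.Ioc (-Real.pi) Real.pi := by
    rw [hargz]
    rcases lt_trichotomy w.im 0 with h | h | h
    · -- arg u ∈ (0, π]
      have him : 0 < (Complex.exp (-w)).im := exp_im_pos hnw (by simpa using h)
      have hupos : 0 < (f (Complex.exp (-w))).im := hf.im_pos hc him
      have h1 : 0 < Complex.arg (f (Complex.exp (-w))) := arg_pos_of_im_pos hupos
      have h2 := Complex.arg_le_pi (f (Complex.exp (-w)))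
      exact Set.mem_Ioc.mpr ⟨by linarith [hw.1], by linarith [hw.2]⟩
    · -- both args zero-ish : u is a positive real
      have hwre : -w = ((-w).re : ℂ) := by apply Complex.ext <;> simp [h]
      have : Complex.exp (-w) = ((Real.exp (-w).re : ℝ) : ℂ) := by
        rw [Complex.ofReal_exp]; exact congrArg Complex.exp hwre
      obtain ⟨t, ht0, ht⟩ := hf.pos_real hc (Real.exp_pos (-w).re)
      rw [this, ht, Complex.arg_ofReal_of_nonneg ht0.le, h]
      exact Set.mem_Ioc.mpr ⟨by linarith [Real.pi_pos], by linarith [Real.pi_pos]⟩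
    · -- arg u ∈ (-π, 0)
      have him : (Complex.exp (-w)).im < 0 := exp_im_neg hnw (by simpa using h)
      have huneg : (f (Complex.exp (-w))).im < 0 := hf.im_neg hc him
      have h1 : Complex.arg (f (Complex.exp (-w))) < 0 := Complex.arg_neg_iff.2 huneg
      have h2 := Complex.neg_pi_lt_arg (f (Complex.exp (-w)))
      exact Set.mem_Ioc.mpr ⟨by linarith [hw.1], by linarith [hw.2]⟩
  rw [hE, Complex.log_mul hz0 hu0 harg, Complex.log_exp hw.1 hw.2.le]

lemma Mclass.arg_nonneg_exp (hc : 1 < c) (hf : Mclass c f) {w : ℂ} (hw : w ∈ strip)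
    (h : 0 ≤ w.im) : 0 ≤ Complex.arg (f (Complex.exp w)) := by
  rcases h.lt_or_eq with h1 | h1
  · exact (arg_pos_of_im_pos (hf.im_pos hc (exp_im_pos hw h1))).le
  · have hwre : w = ((w).re : ℂ) := by apply Complex.ext <;> simp [← h1]
    have : Complex.exp w = ((Real.exp w.re : ℝ) : ℂ) := by
      rw [Complex.ofReal_exp]; exact congrArg Complex.exp hwre
    obtain ⟨t, ht0, ht⟩ := hf.pos_real hc (Real.exp_pos w.re)
    rw [this, ht, Complex.arg_ofReal_of_nonneg ht0.le]

lemma Mclass.arg_nonpos_exp_neg (hc : 1 < c) (hf : Mclass c f) {w : ℂ} (hw : w ∈ strip)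
    (h : 0 ≤ w.im) : Complex.arg (f (Complex.exp (-w))) ≤ 0 := by
  have hnw : -w ∈ strip := neg_mem_strip hw
  rcases h.lt_or_eq with h1 | h1
  · have him : (Complex.exp (-w)).im < 0 := exp_im_neg hnw (by simpa using h1)
    exact (Complex.arg_neg_iff.2 (hf.im_neg hc him)).le
  · have hwre : -w = ((-w).re : ℂ) := by apply Complex.ext <;> simp [← h1]
    have : Complex.exp (-w) = ((Real.exp (-w).re : ℝ) : ℂ) := by
      rw [Complex.ofReal_exp]; exact congrArg Complex.exp hwre
    obtain ⟨t, ht0, ht⟩ := hf.pos_real hc (Real.exp_pos (-w).re)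
    rw [this, ht, Complex.arg_ofReal_of_nonneg ht0.le]

lemma Mclass.Smem (hc : 1 < c) (hp : p = 2 * Real.log c) (hf : Mclass c f) :
    Wclass p (fun w => Complex.log (f (Complex.exp w)) - w / 2) := by
  have hc0 : (0 : ℝ) < c := lt_trans one_pos hc
  refine ⟨?_, ?_, ?_, ?_, ?_⟩
  · -- differentiability
    intro w hw
    have hz : Complex.exp w ∈ Complex.slitPlane := strip_exp_mem hw
    have hfz : f (Complex.exp w) ∈ Complex.slitPlane := hf.wd hc hw
    have h1 : DifferentiableAt ℂ f (Complex.exp w) :=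
      hf.1.1.differentiableAt (Complex.isOpen_slitPlane.mem_nhds hz)
    have h2 : DifferentiableAt ℂ Complex.log (f (Complex.exp w)) :=
      Complex.differentiableAt_log hfz
    have h3 : DifferentiableAt ℂ (fun w => Complex.log (f (Complex.exp w))) w :=
      by have := h2.comp w (h1.comp w Complex.differentiable_exp.differentiableAt); exact this
    exact (h3.sub ((differentiableAt_id.div_const 2))).differentiableWithinAt
  · -- the bound
    intro w hw him
    have hsplit := hf.log_split hc hw
    have hA : 0 ≤ Complex.arg (f (Complex.exp w)) := hf.arg_nonneg_exp hc hw him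
    have hB : Complex.arg (f (Complex.exp (-w))) ≤ 0 := hf.arg_nonpos_exp_neg hc hw him
    have him1 : (Complex.log (f (Complex.exp w))).im
        = w.im + Complex.arg (f (Complex.exp (-w))) := by
      rw [hsplit]; simp [Complex.add_im, Complex.log_im]
    have him2 : (Complex.log (f (Complex.exp w))).im = Complex.arg (f (Complex.exp w)) :=
      Complex.log_im _
    have him3 : (Complex.log (f (Complex.exp w)) - w / 2).im
        = (Complex.log (f (Complex.exp w))).im - w.im / 2 := by
      rw [Complex.sub_im]
      congr 1
      rw [Complex.div_im]
      simp
      ring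
    rw [him3, abs_le]
    constructor
    · rw [him2]; linarith
    · rw [him1]; linarith
  · show Complex.log (f (Complex.exp 0)) - 0 / 2 = 0
    rw [Complex.exp_zero, hf.2.1, Complex.log_one]
    simp
  · intro w hw
    have hsplit := hf.log_split hc hw
    simp only
    rw [hsplit]
    ring
  · intro w hw
    simp only
    have he : Complex.exp (w + (p : ℂ)) = (c : ℂ) ^ 2 * Complex.exp w := by
      rw [Complex.exp_add]
      have : Complex.exp ((p : ℂ)) = ((Real.exp p : ℝ) : ℂ) := (Complex.ofReal_exp p).symm
      rw [this, hp]
      have : Real.exp (2 * Real.log c) = c ^ 2 := by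
        rw [two_mul, Real.exp_add, Real.exp_log hc0]; ring
      rw [this]
      push_cast
      ring
    rw [he, hf.funcEq2 hc _ (strip_exp_mem hw)]
    have hfz : f (Complex.exp w) ∈ Complex.slitPlane := hf.wd hc hw
    rw [Complex.log_ofReal_mul hc0 (Complex.slitPlane_ne_zero hfz)]
    have : ((Real.log c : ℝ) : ℂ) = (p : ℂ) / 2 := by
      rw [hp]; push_cast; ring
    rw [this]
    ring

lemma div_two_im (w : ℂ) : (w / 2).im = w.im / 2 := by
  rw [Complex.div_im]; simp; ring

lemma Mclass.inj {c : ℝ} (hc : 1 < c) {f g : ℂ → ℂ} (hf : Mclass c f) (hg : Mclass c g)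
    (h : ∀ w ∈ strip, Complex.log (f (Complex.exp w)) - w / 2
        = Complex.log (g (Complex.exp w)) - w / 2) :
    ∀ z ∈ Complex.slitPlane, f z = g z := by
  intro z hz
  have hw : Complex.log z ∈ strip := log_mem_strip hz
  have hez : Complex.exp (Complex.log z) = z := Complex.exp_log (Complex.slitPlane_ne_zero hz)
  have h1 := h _ hw
  rw [hez] at h1
  have h2 : Complex.log (f z) = Complex.log (g z) := by
    have := sub_left_injective h1
    exact this
  have hfz := hf.wd hc hw
  have hgz := hg.wd hc hw
  rw [hez] at hfz hgz
  calc f z = Complex.exp (Complex.log (f z)) :=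
        (Complex.exp_log (Complex.slitPlane_ne_zero hfz)).symm
    _ = Complex.exp (Complex.log (g z)) := by rw [h2]
    _ = g z := Complex.exp_log (Complex.slitPlane_ne_zero hgz)

section Surj
variable {p c : ℝ} {S : ℂ → ℂ}

lemma real_mem_strip (r : ℝ) : (r : ℂ) ∈ strip := by
  constructor <;> simp [Real.pi_pos]

lemma Wclass.real_im (hS : Wclass p S) (r : ℝ) : (S (r : ℂ)).im = 0 := by
  have := hS.2.1 (r : ℂ) (real_mem_strip r) (by simp)
  simp only [Complex.ofReal_im, zero_div] at this
  exact abs_nonpos_iff.mp this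

lemma Wclass.M_exists (hc : 1 < c) (hp : p = 2 * Real.log c) (hS : Wclass p S) :
    Mclass c (fun z => Complex.exp (S (Complex.log z) + Complex.log z / 2)) := by
  have hc0 : (0 : ℝ) < c := lt_trans one_pos hc
  have hlogx : ∀ x : ℝ, 0 < x → Complex.log ((x : ℂ)) = ((Real.log x : ℝ) : ℂ) :=
    fun x hx => (Complex.ofReal_log hx.le).symm
  refine ⟨⟨?_, ?_, ?_⟩, ?_, ?_, ?_⟩
  · -- differentiable
    intro z hz
    have h1 : DifferentiableAt ℂ Complex.log z := Complex.differentiableAt_log hz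
    have h2 : DifferentiableAt ℂ S (Complex.log z) :=
      hS.1.differentiableAt (isOpen_strip.mem_nhds (log_mem_strip hz))
    exact (Complex.differentiable_exp.differentiableAt.comp z
      ((h2.comp z h1).add (h1.div_const 2))).differentiableWithinAt
  · -- real nonneg
    intro x hx
    refine ⟨Real.exp ((S ((Real.log x : ℝ) : ℂ)).re + Real.log x / 2),
      (Real.exp_pos _).le, ?_⟩
    show Complex.exp (S (Complex.log (x : ℂ)) + Complex.log (x : ℂ) / 2) = _
    rw [hlogx x hx]
    have hre : S ((Real.log x : ℝ) : ℂ) = (((S ((Real.log x : ℝ) : ℂ)).re : ℝ) : ℂ) := by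
      apply Complex.ext
      · simp
      · simp [hS.real_im]
    rw [hre]
    rw [show ((((S ((Real.log x : ℝ) : ℂ)).re : ℝ)) : ℂ) + ((Real.log x : ℝ) : ℂ) / 2
        = (((S ((Real.log x : ℝ) : ℂ)).re + Real.log x / 2 : ℝ) : ℂ) by push_cast; ring]
    rw [← Complex.ofReal_exp]
    simp
  · -- im nonneg on upper half plane
    intro z hz
    have hzs : z ∈ Complex.slitPlane := Complex.mem_slitPlane_iff.mpr (Or.inr (ne_of_gt hz))
    have hws : Complex.log z ∈ strip := log_mem_strip hzs
    have hθpos : 0 < (Complex.log z).im := by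
      rw [Complex.log_im]; exact arg_pos_of_im_pos hz
    have hθpi : (Complex.log z).im ≤ Real.pi := by
      rw [Complex.log_im]; exact Complex.arg_le_pi z
    have hbound := abs_le.mp (hS.2.1 _ hws hθpos.le)
    show 0 ≤ (Complex.exp (S (Complex.log z) + Complex.log z / 2)).im
    rw [Complex.exp_im]
    apply mul_nonneg (Real.exp_pos _).le
    apply Real.sin_nonneg_of_nonneg_of_le_pi
    · rw [Complex.add_im, div_two_im]; linarith [hbound.1]
    · rw [Complex.add_im, div_two_im]; linarith [hbound.2]
  · -- value at 1
    show Complex.exp (S (Complex.log 1) + Complex.log 1 / 2) = 1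
    rw [Complex.log_one, hS.2.2.1]
    simp
  · -- symmetry
    intro x hx
    show Complex.exp (S (Complex.log (x : ℂ)) + Complex.log (x : ℂ) / 2)
      = (x : ℂ) * Complex.exp (S (Complex.log ((x : ℂ))⁻¹) + Complex.log ((x : ℂ))⁻¹ / 2)
    have hx1 : ((x : ℂ))⁻¹ = ((x⁻¹ : ℝ) : ℂ) := by push_cast; ring
    rw [hx1, hlogx x hx, hlogx _ (inv_pos.2 hx), Real.log_inv]
    rw [show ((-Real.log x : ℝ) : ℂ) = -((Real.log x : ℝ) : ℂ) by push_cast; ring]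
    rw [hS.2.2.2.1 ((Real.log x : ℝ) : ℂ) (real_mem_strip _)]
    rw [show (x : ℂ) = Complex.exp ((Real.log x : ℝ) : ℂ) by
      rw [← Complex.ofReal_exp, Real.exp_log hx]]
    rw [← Complex.exp_add]
    congr 1
    ring
  · -- scaling
    intro x hx
    have hcx : (0 : ℝ) < c ^ 2 * x := by positivity
    show Complex.exp (S (Complex.log ((c ^ 2 * x : ℝ) : ℂ)) + Complex.log ((c ^ 2 * x : ℝ) : ℂ) / 2)
      = (c : ℂ) * Complex.exp (S (Complex.log (x : ℂ)) + Complex.log (x : ℂ) / 2)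
    rw [hlogx _ hcx, hlogx x hx]
    have hlcc : Real.log (c ^ 2 * x) = p + Real.log x := by
      rw [Real.log_mul (by positivity) hx.ne', Real.log_pow, hp]
      push_cast
      ring
    rw [show ((Real.log (c ^ 2 * x) : ℝ) : ℂ) = ((Real.log x : ℝ) : ℂ) + (p : ℂ) by
      rw [hlcc]; push_cast; ring]
    rw [hS.2.2.2.2 ((Real.log x : ℝ) : ℂ) (real_mem_strip _)]
    rw [show (c : ℂ) = Complex.exp ((p : ℂ) / 2) by
      rw [show ((p : ℂ) / 2) = ((p / 2 : ℝ) : ℂ) by push_cast; ring, ← Complex.ofReal_exp,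
        hp]
      norm_num
      rw [← Complex.ofReal_exp, Real.exp_log hc0]]
    rw [← Complex.exp_add]
    congr 1
    ring
  
lemma Wclass.recover (hc : 1 < c) (hp : p = 2 * Real.log c) (hS : Wclass p S) :
    ∀ w ∈ strip, Complex.log ((fun z => Complex.exp (S (Complex.log z) + Complex.log z / 2))
      (Complex.exp w)) - w / 2 = S w := by
  intro w hw
  simp only
  rw [Complex.log_exp hw.1 hw.2.le]
  have hbnd : |(S w).im| ≤ |w.im| / 2 := by
    rcases le_or_gt 0 w.im with h | h
    · rw [_root_.abs_of_nonneg h]; exact hS.2.1 w hw h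
    · have heq : S w = S (-w) := by
        have := hS.2.2.2.1 (-w) (neg_mem_strip hw)
        rw [neg_neg] at this
        exact this
      rw [heq, _root_.abs_of_neg h]
      have := hS.2.1 (-w) (neg_mem_strip hw) (by simp only [Complex.neg_im]; linarith)
      simpa using this
  have habs := abs_le.mp hbnd
  have hwabs : |w.im| < Real.pi := abs_lt.mpr ⟨hw.1, hw.2⟩
  have him : (S w + w / 2).im = (S w).im + w.im / 2 := by
    rw [Complex.add_im, div_two_im]
  have h1 : -Real.pi < (S w + w / 2).im := by
    rw [him]
    have : -(|w.im| / 2) - |w.im| / 2 ≤ (S w).im + w.im / 2 := by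
      have : -(|w.im| / 2) ≤ w.im / 2 := by
        rcases abs_cases w.im with ⟨h, _⟩ | ⟨h, _⟩ <;> linarith
      linarith [habs.1]
    linarith
  have h2 : (S w + w / 2).im ≤ Real.pi := by
    rw [him]
    have : w.im / 2 ≤ |w.im| / 2 := by
      rcases abs_cases w.im with ⟨h, _⟩ | ⟨h, _⟩ <;> linarith
    linarith [habs.2]
  rw [Complex.log_exp h1 h2]
  ring

end Surj

/-- For `c > 1` and `p = 2 log c`, the map `f ↦ S_f`,
`S_f(w) = Log f(e^w) - w/2`, is well defined on `M_c` and maps `M_c`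
bijectively onto `W_p` (membership of functions in `W_p` understood as
equality of restrictions to `D`). -/
theorem stmt_6 (c : ℝ) (hc : 1 < c) (p : ℝ) (hp : p = 2 * Real.log c) :
    (∀ f : ℂ → ℂ, Mclass c f → ∀ w ∈ strip, f (Complex.exp w) ∈ Complex.slitPlane) ∧
    (∀ f : ℂ → ℂ, Mclass c f →
      Wclass p (fun w => Complex.log (f (Complex.exp w)) - w / 2)) ∧
    (∀ f g : ℂ → ℂ, Mclass c f → Mclass c g →
      (∀ w ∈ strip,
        Complex.log (f (Complex.exp w)) - w / 2 =
          Complex.log (g (Complex.exp w)) - w / 2) →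
      ∀ z ∈ Complex.slitPlane, f z = g z) ∧
    (∀ S : ℂ → ℂ, Wclass p S → ∃ f : ℂ → ℂ, Mclass c f ∧
      ∀ w ∈ strip, Complex.log (f (Complex.exp w)) - w / 2 = S w) := by
  refine ⟨?_, ?_, ?_, ?_⟩
  · intro f hf w hw
    exact hf.wd hc hw
  · intro f hf
    exact hf.Smem hc hp
  · intro f g hf hg h
    exact Mclass.inj hc hf hg h
  · intro S hS
    exact ⟨_, hS.M_exists hc hp, hS.recover hc hp⟩
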